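/- arXiv:2402.07484 — 3 statements merged into one kernel-verified Lean document; each statement's English description precedes it below -/
import Mathlib

section
/- Let p > 1, let l = (a,b) ∈ ℤ² be nonzero, l^⊥ = (−b,a), and let z ∈ ℤ² satisfy ⟨z,l⟩ ≥ 0 and ⟨z,l^⊥⟩ ≥ 1. Define the orbit Γ(n) = z + ⌊(n+1)/2⌋·l + ⌊n/2⌋·l^⊥ for n ∈ ℕ and Δ(n) = Γ(n+1) − Γ(n). Let Y : ℤ² → [0,∞) satisfy ∑_{n∈ℕ} Y(Γ(n))^p < ∞. Then ∑_{n∈ℕ} ( |Γ(n)|² − ⟨Γ(n),Δ(n)⟩²/|l|² ) (Y(Γ(n+1))^{p−1} − Y(Γ(n))^{p−1})(Y(Γ(n+1)) − Y(Γ(n))) ≥ ((p−1)/(8p²|l|²)) · ∑_{n∈ℕ} Y(Γ(n))^p, where the left-hand series, whose terms are non-negative, is interpreted as a value in [0,∞]. -/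
noncomputable section

/-- Euclidean inner product on `ℤ²` (integer valued). -/
def ipz (k l : ℤ × ℤ) : ℤ := k.1 * l.1 + k.2 * l.2

/-- Squared Euclidean norm on `ℤ²` (integer valued). -/
def nsqz (k : ℤ × ℤ) : ℤ := k.1 ^ 2 + k.2 ^ 2

/-- Rotation by 90 degrees: for `l = (a,b)`, `perp l = (-b,a)`. -/
def perp (l : ℤ × ℤ) : ℤ × ℤ := (-l.2, l.1)

/-- First class of orbits: `Γ(n) = z + ⌊(n+1)/2⌋ l + ⌊n/2⌋ l^⊥`. -/
def orbit1 (z l : ℤ × ℤ) (n : ℕ) : ℤ × ℤ :=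
  z + (((n + 1) / 2 : ℕ) : ℤ) • l + ((n / 2 : ℕ) : ℤ) • perp l

section PoincareAux
open Real Finset



lemma bern {q x y : ℝ} (hq0 : 0 < q) (hq1 : q ≤ 1) (hx : 0 < x) (hy : 0 ≤ y) (hxy : y ≤ x) :
    q * x ^ (q - 1) * (x - y) ≤ x ^ q - y ^ q := by
  have hs : (-1 : ℝ) ≤ y / x - 1 := by
    have : 0 ≤ y / x := div_nonneg hy hx.le
    linarith
  have hb : (1 + (y / x - 1)) ^ q ≤ 1 + q * (y / x - 1) :=
    rpow_one_add_le_one_add_mul_self hs hq0.le hq1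
  have h1 : (1 : ℝ) + (y / x - 1) = y / x := by ring
  rw [h1, Real.div_rpow hy hx.le] at hb
  have hxq : (0 : ℝ) < x ^ q := Real.rpow_pos_of_pos hx q
  rw [div_le_iff₀ hxq] at hb
  rw [Real.rpow_sub hx, Real.rpow_one]
  have key : (1 + q * (y / x - 1)) * x ^ q = x ^ q - q * (x ^ q / x) * (x - y) := by
    field_simp
    ring
  linarith

lemma fac2 {r x y : ℝ} (hr : 1 ≤ r) (hx : 0 < x) (hy : 0 ≤ y) (hxy : y ≤ x) :
    x ^ (r - 1) * (x - y) ≤ x ^ r - y ^ r := by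
  have h1 : y ^ (r - 1) ≤ x ^ (r - 1) := Real.rpow_le_rpow hy hxy (by linarith)
  have hx' : x ^ r = x ^ (r - 1) * x := by
    rw [← Real.rpow_add_one hx.ne']; ring_nf
  have hy' : y ^ r = y ^ (r - 1) * y := by
    rcases eq_or_lt_of_le hy with h | h
    · rw [← h]
      simp [Real.zero_rpow (show r ≠ 0 by linarith)]
    · rw [← Real.rpow_add_one h.ne']; ring_nf
  have h2 : y ^ (r - 1) * y ≤ x ^ (r - 1) * y := mul_le_mul_of_nonneg_right h1 hy
  rw [hx', hy']
  linarith [mul_le_mul_of_nonneg_right h1 hy]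

lemma prod_ineq {q x y : ℝ} (hq0 : 0 < q) (hq1 : q ≤ 1) (hy : 0 ≤ y) (hxy : y ≤ x) :
    q * (x - y) ^ 2 ≤ (x ^ q - y ^ q) * (x ^ (2 - q) - y ^ (2 - q)) := by
  have hx : 0 ≤ x := hy.trans hxy
  rcases eq_or_lt_of_le hx with h | hx
  · have hy0 : y = 0 := le_antisymm (hxy.trans h.symm.le) hy
    rw [← h, hy0]
    simp [Real.zero_rpow hq0.ne']
  have h1 := bern hq0 hq1 hx hy hxy
  have h2 := fac2 (r := 2 - q) (by linarith) hx hy hxy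
  have e : x ^ (q - 1) * x ^ (2 - q - 1) = 1 := by
    rw [← Real.rpow_add hx]
    have : q - 1 + (2 - q - 1) = 0 := by ring
    rw [this, Real.rpow_zero]
  have hd : 0 ≤ x - y := by linarith
  have hA : 0 ≤ q * x ^ (q - 1) * (x - y) := by
    have := Real.rpow_nonneg hx.le (q - 1)
    positivity
  have hB : 0 ≤ x ^ (2 - q - 1) * (x - y) := by
    have := Real.rpow_nonneg hx.le (2 - q - 1)
    positivity
  have hm := mul_le_mul h1 h2 hB (by linarith)
  have key : (q * x ^ (q - 1) * (x - y)) * (x ^ (2 - q - 1) * (x - y))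
      = q * (x ^ (q - 1) * x ^ (2 - q - 1)) * (x - y) ^ 2 := by ring
  rw [key, e] at hm
  linarith [hm]

lemma pow_ineq_aux {p a b : ℝ} (hp : 1 < p) (hb : 0 ≤ b) (hba : b ≤ a) :
    2 * (p - 1) / p ^ 2 * (a ^ (p / 2) - b ^ (p / 2)) ^ 2
      ≤ (a ^ (p - 1) - b ^ (p - 1)) * (a - b) := by
  have ha : 0 ≤ a := hb.trans hba
  have hp0 : (0 : ℝ) < p := by linarith
  have hxy : b ^ (p / 2) ≤ a ^ (p / 2) := Real.rpow_le_rpow hb hba (by positivity)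
  have hy : 0 ≤ b ^ (p / 2) := Real.rpow_nonneg hb _
  -- identities
  have ida1 : (a ^ (p / 2)) ^ (2 * (p - 1) / p) = a ^ (p - 1) := by
    rw [← Real.rpow_mul ha]
    congr 1
    field_simp
  have idb1 : (b ^ (p / 2)) ^ (2 * (p - 1) / p) = b ^ (p - 1) := by
    rw [← Real.rpow_mul hb]
    congr 1
    field_simp
  have ida2 : (a ^ (p / 2)) ^ (2 / p) = a := by
    rw [← Real.rpow_mul ha]
    rw [show p / 2 * (2 / p) = 1 by field_simp, Real.rpow_one]
  have idb2 : (b ^ (p / 2)) ^ (2 / p) = b := by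
    rw [← Real.rpow_mul hb]
    rw [show p / 2 * (2 / p) = 1 by field_simp, Real.rpow_one]
  rcases le_total p 2 with h2 | h2
  · -- q = 2(p-1)/p ≤ 1, 2 - q = 2/p
    have hq0 : 0 < 2 * (p - 1) / p := div_pos (by linarith) hp0
    have hq1 : 2 * (p - 1) / p ≤ 1 := by
      rw [div_le_one hp0]; linarith
    have h := prod_ineq hq0 hq1 hy hxy
    rw [show 2 - 2 * (p - 1) / p = 2 / p by field_simp; ring] at h
    rw [ida1, idb1, ida2, idb2] at h
    have hc : 2 * (p - 1) / p ^ 2 ≤ 2 * (p - 1) / p := by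
      apply div_le_div_of_nonneg_left (by linarith) hp0
      nlinarith
    nlinarith [sq_nonneg (a ^ (p / 2) - b ^ (p / 2))]
  · -- q = 2/p ≤ 1, 2 - q = 2(p-1)/p
    have hq0 : 0 < 2 / p := by positivity
    have hq1 : 2 / p ≤ 1 := by rw [div_le_one hp0]; linarith
    have h := prod_ineq hq0 hq1 hy hxy
    rw [show 2 - 2 / p = 2 * (p - 1) / p by field_simp] at h
    rw [ida1, idb1, ida2, idb2] at h
    have hc : 2 * (p - 1) / p ^ 2 ≤ 2 / p := by
      rw [div_le_div_iff₀ (by positivity) hp0]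
      nlinarith
    nlinarith [sq_nonneg (a ^ (p / 2) - b ^ (p / 2))]

lemma pow_ineq {p a b : ℝ} (hp : 1 < p) (ha : 0 ≤ a) (hb : 0 ≤ b) :
    2 * (p - 1) / p ^ 2 * (a ^ (p / 2) - b ^ (p / 2)) ^ 2
      ≤ (a ^ (p - 1) - b ^ (p - 1)) * (a - b) := by
  rcases le_total b a with h | h
  · exact pow_ineq_aux hp hb h
  · have := pow_ineq_aux hp ha h
    nlinarith [this]


lemma hardy {u : ℕ → ℝ} (hu : ∀ n, 0 ≤ u n) (hS : Summable fun n : ℕ => u n ^ 2)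
    (hD : Summable fun n : ℕ => ((n : ℝ) + 1) ^ 2 * (u (n + 1) - u n) ^ 2) :
    ∑' n : ℕ, u n ^ 2 ≤ 4 * ∑' n : ℕ, ((n : ℝ) + 1) ^ 2 * (u (n + 1) - u n) ^ 2 := by
  set v : ℕ → ℝ := fun n : ℕ => (u n + u (n + 1)) * |u (n + 1) - u n| with hv
  have hv0 : ∀ n, 0 ≤ v n := fun n =>
    mul_nonneg (by have := hu n; have := hu (n + 1); linarith) (abs_nonneg _)
  have hS1 : Summable fun n : ℕ => u (n + 1) ^ 2 := (summable_nat_add_iff 1).mpr hS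
  have hP : Summable fun n : ℕ => (u n + u (n + 1)) ^ 2 := by
    apply Summable.of_nonneg_of_le (fun n => sq_nonneg _)
      (fun n => by nlinarith [sq_nonneg (u n - u (n + 1))])
      ((hS.mul_left 2).add (hS1.mul_left 2))
  have hw : ∀ n : ℕ, ((n : ℝ) + 1) * v n
      ≤ (u n + u (n + 1)) ^ 2 / 8 + 2 * (((n : ℝ) + 1) ^ 2 * (u (n + 1) - u n) ^ 2) := by
    intro n
    have h2 : |u (n + 1) - u n| ^ 2 = (u (n + 1) - u n) ^ 2 := sq_abs _
    have h3 : (0 : ℝ) ≤ (n : ℝ) + 1 := by positivity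
    show ((n : ℝ) + 1) * ((u n + u (n + 1)) * |u (n + 1) - u n|) ≤ _
    nlinarith [sq_nonneg ((u n + u (n + 1)) - 4 * (((n : ℝ) + 1) * |u (n + 1) - u n|))]
  have hWsum : Summable fun n : ℕ => ((n : ℝ) + 1) * v n := by
    apply Summable.of_nonneg_of_le (fun n => mul_nonneg (by positivity) (hv0 n)) hw
    exact (hP.div_const 8).add (hD.mul_left 2)
  have hvsum : Summable v := by
    apply Summable.of_nonneg_of_le hv0 (fun n => ?_) hWsum
    have h : (1 : ℝ) ≤ (n : ℝ) + 1 := by linarith [Nat.cast_nonneg (α := ℝ) n]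
    nlinarith [hv0 n]
  have hvshift : ∀ n : ℕ, Summable fun k : ℕ => v (k + n) := fun n =>
    (summable_nat_add_iff n).mpr hvsum
  set T : ℕ → ℝ := fun n : ℕ => ∑' k : ℕ, v (k + n) with hT
  have hTv : ∀ n, T n = v n + T (n + 1) := by
    intro n
    show (∑' k : ℕ, v (k + n)) = v n + ∑' k : ℕ, v (k + (n + 1))
    rw [Summable.tsum_eq_zero_add (hvshift n)]
    simp only [zero_add]
    congr 1
    apply tsum_congr
    intro k
    congr 1
    omega
  have hTn : ∀ n, u n ^ 2 ≤ T n := by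
    intro n
    have hsnn : ∀ k : ℕ, 0 ≤ u (k + n) + u (k + n + 1) := fun k => by
      have := hu (k + n); have := hu (k + n + 1); linarith
    have h1 : ∀ k : ℕ, u (k + n) - u (k + n + 1) ≤ |u (k + n + 1) - u (k + n)| := fun k => by
      rw [abs_sub_comm]; exact le_abs_self _
    have hg : ∀ k : ℕ, u (k + n) ^ 2 - u (k + 1 + n) ^ 2 ≤ v (k + n) := by
      intro k
      have e : k + 1 + n = k + n + 1 := by omega
      rw [e]
      show _ ≤ (u (k + n) + u (k + n + 1)) * |u (k + n + 1) - u (k + n)|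
      nlinarith [mul_le_mul_of_nonneg_left (h1 k) (hsnn k)]
    have habs : ∀ k : ℕ, |u (k + n) ^ 2 - u (k + 1 + n) ^ 2| ≤ v (k + n) := by
      intro k
      have e : k + 1 + n = k + n + 1 := by omega
      rw [e]
      show _ ≤ (u (k + n) + u (k + n + 1)) * |u (k + n + 1) - u (k + n)|
      have he : |u (k + n) ^ 2 - u (k + n + 1) ^ 2|
          = |u (k + n) + u (k + n + 1)| * |u (k + n + 1) - u (k + n)| := by
        rw [← abs_mul, abs_sub_comm]
        congr 1
        ring
      rw [he, abs_of_nonneg (hsnn k)]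
    have hgsum : Summable fun k : ℕ => u (k + n) ^ 2 - u (k + 1 + n) ^ 2 :=
      Summable.of_abs (Summable.of_nonneg_of_le (fun k => abs_nonneg _) habs (hvshift n))
    have hts : HasSum (fun k : ℕ => u (k + n) ^ 2 - u (k + 1 + n) ^ 2) (u n ^ 2) := by
      rw [hgsum.hasSum_iff_tendsto_nat]
      have hps : ∀ N : ℕ, ∑ k ∈ range N, (u (k + n) ^ 2 - u (k + 1 + n) ^ 2)
          = u n ^ 2 - u (N + n) ^ 2 := by
        intro N
        have := Finset.sum_range_sub' (f := fun k : ℕ => u (k + n) ^ 2) N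
        simpa using this
      simp only [hps]
      have htail : Filter.Tendsto (fun N : ℕ => u (N + n) ^ 2) Filter.atTop (nhds 0) :=
        hS.tendsto_atTop_zero.comp (Filter.tendsto_add_atTop_nat n)
      have := Filter.Tendsto.sub (tendsto_const_nhds (x := u n ^ 2)) htail
      simpa using this
    calc u n ^ 2 = ∑' k : ℕ, (u (k + n) ^ 2 - u (k + 1 + n) ^ 2) := hts.tsum_eq.symm
    _ ≤ ∑' k : ℕ, v (k + n) := Summable.tsum_le_tsum hg hgsum (hvshift n)
    _ = T n := rfl
  have hid : ∀ N : ℕ, ∑ n ∈ range N, T n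
      = (∑ m ∈ range N, ((m : ℝ) + 1) * v m) + N * T N := by
    intro N
    induction N with
    | zero => simp
    | succ N ih =>
      rw [Finset.sum_range_succ, ih, Finset.sum_range_succ, hTv N]
      push_cast
      ring
  have htail : ∀ N : ℕ, (N : ℝ) * T N ≤ ∑' k : ℕ, (((k + N : ℕ) : ℝ) + 1) * v (k + N) := by
    intro N
    have e : (N : ℝ) * T N = ∑' k : ℕ, (N : ℝ) * v (k + N) := by
      rw [← tsum_mul_left]
    rw [e]
    apply Summable.tsum_le_tsum _ ((hvshift N).mul_left _) ((summable_nat_add_iff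
      (f := fun n : ℕ => ((n : ℝ) + 1) * v n) N).mpr hWsum)
    intro k
    apply mul_le_mul_of_nonneg_right _ (hv0 _)
    push_cast
    linarith [Nat.cast_nonneg (α := ℝ) k]
  have hW : ∀ N : ℕ, ∑ n ∈ range N, u n ^ 2 ≤ ∑' n : ℕ, ((n : ℝ) + 1) * v n := by
    intro N
    calc ∑ n ∈ range N, u n ^ 2 ≤ ∑ n ∈ range N, T n := Finset.sum_le_sum fun n _ => hTn n
    _ = (∑ m ∈ range N, ((m : ℝ) + 1) * v m) + N * T N := hid N
    _ ≤ (∑ m ∈ range N, ((m : ℝ) + 1) * v m)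
        + ∑' k : ℕ, (((k + N : ℕ) : ℝ) + 1) * v (k + N) := by linarith [htail N]
    _ = ∑' n : ℕ, ((n : ℝ) + 1) * v n :=
        Summable.sum_add_tsum_nat_add (f := fun n : ℕ => ((n : ℝ) + 1) * v n) N hWsum
  have hSW : ∑' n : ℕ, u n ^ 2 ≤ ∑' n : ℕ, ((n : ℝ) + 1) * v n :=
    Real.tsum_le_of_sum_range_le (fun n => sq_nonneg _) hW
  have hWD : ∑' n : ℕ, ((n : ℝ) + 1) * v n
      ≤ (∑' n : ℕ, u n ^ 2) / 2 + 2 * ∑' n : ℕ, ((n : ℝ) + 1) ^ 2 * (u (n + 1) - u n) ^ 2 := by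
    have h1 : ∑' n : ℕ, ((n : ℝ) + 1) * v n
        ≤ ∑' n : ℕ, ((u n + u (n + 1)) ^ 2 / 8
          + 2 * (((n : ℝ) + 1) ^ 2 * (u (n + 1) - u n) ^ 2)) :=
      Summable.tsum_le_tsum hw hWsum ((hP.div_const 8).add (hD.mul_left 2))
    rw [Summable.tsum_add (hP.div_const 8) (hD.mul_left 2), tsum_div_const, tsum_mul_left] at h1
    have h2 : ∑' n : ℕ, (u n + u (n + 1)) ^ 2 ≤ 4 * ∑' n : ℕ, u n ^ 2 := by
      have h3 : ∑' n : ℕ, (u n + u (n + 1)) ^ 2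
          ≤ ∑' n : ℕ, (2 * u n ^ 2 + 2 * u (n + 1) ^ 2) :=
        Summable.tsum_le_tsum (fun n => by nlinarith [sq_nonneg (u n - u (n + 1))]) hP
          ((hS.mul_left 2).add (hS1.mul_left 2))
      rw [Summable.tsum_add (hS.mul_left 2) (hS1.mul_left 2), tsum_mul_left, tsum_mul_left] at h3
      have h4 : ∑' n : ℕ, u (n + 1) ^ 2 ≤ ∑' n : ℕ, u n ^ 2 := by
        have h6 := Summable.sum_add_tsum_nat_add (f := fun n : ℕ => u n ^ 2) 1 hS
        have h5 : 0 ≤ ∑ i ∈ range 1, u i ^ 2 := Finset.sum_nonneg fun i _ => sq_nonneg _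
        linarith
      linarith
    linarith
  linarith


lemma lagrange (w l : ℤ × ℤ) : nsqz w * nsqz l = ipz w l ^ 2 + ipz w (perp l) ^ 2 := by
  simp only [nsqz, ipz, perp]
  ring

lemma orbit_fst (z l : ℤ × ℤ) (n : ℕ) :
    (orbit1 z l n).1 = z.1 + (((n + 1) / 2 : ℕ) : ℤ) * l.1 - ((n / 2 : ℕ) : ℤ) * l.2 := by
  simp [orbit1, perp, Prod.fst_add, smul_eq_mul]
  ring

lemma orbit_snd (z l : ℤ × ℤ) (n : ℕ) :
    (orbit1 z l n).2 = z.2 + (((n + 1) / 2 : ℕ) : ℤ) * l.2 + ((n / 2 : ℕ) : ℤ) * l.1 := by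
  simp [orbit1, perp, Prod.snd_add, smul_eq_mul]

lemma orbit_ip1 (z l : ℤ × ℤ) (n : ℕ) :
    ipz (orbit1 z l n) l = ipz z l + (((n + 1) / 2 : ℕ) : ℤ) * nsqz l := by
  simp only [ipz, nsqz, orbit_fst, orbit_snd]
  ring

lemma orbit_ip2 (z l : ℤ × ℤ) (n : ℕ) :
    ipz (orbit1 z l n) (perp l) = ipz z (perp l) + ((n / 2 : ℕ) : ℤ) * nsqz l := by
  simp only [ipz, nsqz, perp, orbit_fst, orbit_snd]
  ring

lemma delta_even (z l : ℤ × ℤ) (m : ℕ) :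
    orbit1 z l (m + m + 1) - orbit1 z l (m + m) = l := by
  have e1 : (m + m + 1 + 1) / 2 = m + 1 := by omega
  have e2 : (m + m + 1) / 2 = m := by omega
  have e3 : (m + m) / 2 = m := by omega
  apply Prod.ext <;>
    simp only [Prod.fst_sub, Prod.snd_sub, orbit_fst, orbit_snd, e1, e2, e3] <;>
    push_cast <;> ring

lemma delta_odd (z l : ℤ × ℤ) (m : ℕ) :
    orbit1 z l (m + m + 1 + 1) - orbit1 z l (m + m + 1) = perp l := by
  have e1 : (m + m + 1 + 1 + 1) / 2 = m + 1 := by omega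
  have e2 : (m + m + 1 + 1) / 2 = m + 1 := by omega
  have e3 : (m + m + 1) / 2 = m := by omega
  apply Prod.ext <;>
    simp only [Prod.fst_sub, Prod.snd_sub, orbit_fst, orbit_snd, perp, e1, e2, e3] <;>
    push_cast <;> ring

lemma nsqz_pos {l : ℤ × ℤ} (hl : l ≠ 0) : 1 ≤ nsqz l := by
  have h : l.1 ≠ 0 ∨ l.2 ≠ 0 := by
    by_contra h
    push_neg at h
    exact hl (Prod.ext h.1 h.2)
  have h1 : 0 ≤ l.1 ^ 2 := sq_nonneg _
  have h2 : 0 ≤ l.2 ^ 2 := sq_nonneg _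
  rcases h with h | h
  · have : 1 ≤ l.1 ^ 2 := by
      rcases lt_or_gt_of_ne h with h' | h' <;> nlinarith
    simp only [nsqz]; linarith
  · have : 1 ≤ l.2 ^ 2 := by
      rcases lt_or_gt_of_ne h with h' | h' <;> nlinarith
    simp only [nsqz]; linarith

-- coefficient lower bound
lemma coeff_bound {z l : ℤ × ℤ} (hl : l ≠ 0) (hz1 : 0 ≤ ipz z l) (hz2 : 1 ≤ ipz z (perp l))
    (n : ℕ) :
    ((n : ℝ) + 1) ^ 2 / (4 * (nsqz l : ℝ))
      ≤ (nsqz (orbit1 z l n) : ℝ)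
        - (ipz (orbit1 z l n) (orbit1 z l (n + 1) - orbit1 z l n) : ℝ) ^ 2 / (nsqz l : ℝ) := by
  have hL : (1 : ℝ) ≤ (nsqz l : ℝ) := by exact_mod_cast nsqz_pos hl
  have hL0 : (0 : ℝ) < (nsqz l : ℝ) := by linarith
  have hlag := lagrange (orbit1 z l n) l
  have hα : (0 : ℝ) ≤ (ipz z l : ℝ) := by exact_mod_cast hz1
  have hβ : (1 : ℝ) ≤ (ipz z (perp l) : ℝ) := by exact_mod_cast hz2
  rcases Nat.even_or_odd n with ⟨m, hm⟩ | ⟨m, hm⟩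
  · -- n = m + m, Δ = l
    subst hm
    rw [delta_even]
    have hA := orbit_ip1 z l (m + m)
    have hB := orbit_ip2 z l (m + m)
    have e2 : (m + m + 1) / 2 = m := by omega
    have e3 : (m + m) / 2 = m := by omega
    rw [e2] at hA
    rw [e3] at hB
    -- real versions
    have hlagR : (nsqz (orbit1 z l (m + m)) : ℝ) * (nsqz l : ℝ)
        = (ipz (orbit1 z l (m + m)) l : ℝ) ^ 2 + (ipz (orbit1 z l (m + m)) (perp l) : ℝ) ^ 2 := by
      exact_mod_cast congrArg (Int.cast : ℤ → ℝ) hlag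
    have hAR : (ipz (orbit1 z l (m + m)) l : ℝ) = (ipz z l : ℝ) + (m : ℝ) * (nsqz l : ℝ) := by
      exact_mod_cast congrArg (Int.cast : ℤ → ℝ) hA
    have hBR : (ipz (orbit1 z l (m + m)) (perp l) : ℝ)
        = (ipz z (perp l) : ℝ) + (m : ℝ) * (nsqz l : ℝ) := by
      exact_mod_cast congrArg (Int.cast : ℤ → ℝ) hB
    have hval : (nsqz (orbit1 z l (m + m)) : ℝ)
        - (ipz (orbit1 z l (m + m)) l : ℝ) ^ 2 / (nsqz l : ℝ)
        = ((ipz z (perp l) : ℝ) + (m : ℝ) * (nsqz l : ℝ)) ^ 2 / (nsqz l : ℝ) := by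
      rw [← hBR]
      field_simp
      linarith [hlagR]
    rw [hval]
    rw [div_le_div_iff₀ (by positivity) hL0]
    have hm0 : (0 : ℝ) ≤ (m : ℝ) := Nat.cast_nonneg m
    have hkey : (m : ℝ) + 1 ≤ (ipz z (perp l) : ℝ) + (m : ℝ) * (nsqz l : ℝ) := by nlinarith
    push_cast
    have hB2 : ((m : ℝ) + 1) ^ 2 ≤ ((ipz z (perp l) : ℝ) + (m : ℝ) * (nsqz l : ℝ)) ^ 2 := by
      nlinarith
    nlinarith [mul_le_mul_of_nonneg_right hB2 hL0.le,
      mul_le_mul_of_nonneg_right (show ((m : ℝ) + (m : ℝ) + 1) ^ 2 ≤ 4 * ((m : ℝ) + 1) ^ 2 by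
        nlinarith) hL0.le]
  · -- n = 2m+1, Δ = perp l
    subst hm
    have hn : 2 * m + 1 = m + m + 1 := by omega
    rw [hn]
    rw [delta_odd]
    have hA := orbit_ip1 z l (m + m + 1)
    have e2 : (m + m + 1 + 1) / 2 = m + 1 := by omega
    rw [e2] at hA
    have hlag' := lagrange (orbit1 z l (m + m + 1)) l
    have hlagR : (nsqz (orbit1 z l (m + m + 1)) : ℝ) * (nsqz l : ℝ)
        = (ipz (orbit1 z l (m + m + 1)) l : ℝ) ^ 2
          + (ipz (orbit1 z l (m + m + 1)) (perp l) : ℝ) ^ 2 := by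
      exact_mod_cast congrArg (Int.cast : ℤ → ℝ) hlag'
    have hAR : (ipz (orbit1 z l (m + m + 1)) l : ℝ)
        = (ipz z l : ℝ) + ((m : ℝ) + 1) * (nsqz l : ℝ) := by
      exact_mod_cast congrArg (Int.cast : ℤ → ℝ) hA
    have hval : (nsqz (orbit1 z l (m + m + 1)) : ℝ)
        - (ipz (orbit1 z l (m + m + 1)) (perp l) : ℝ) ^ 2 / (nsqz l : ℝ)
        = ((ipz z l : ℝ) + ((m : ℝ) + 1) * (nsqz l : ℝ)) ^ 2 / (nsqz l : ℝ) := by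
      rw [← hAR]
      field_simp
      linarith [hlagR]
    rw [hval]
    rw [div_le_div_iff₀ (by positivity) hL0]
    have hm0 : (0 : ℝ) ≤ (m : ℝ) := Nat.cast_nonneg m
    have hkey : (m : ℝ) + 1 ≤ (ipz z l : ℝ) + ((m : ℝ) + 1) * (nsqz l : ℝ) := by nlinarith
    push_cast
    have hB2 : ((m : ℝ) + 1) ^ 2 ≤ ((ipz z l : ℝ) + ((m : ℝ) + 1) * (nsqz l : ℝ)) ^ 2 := by
      nlinarith
    nlinarith [mul_le_mul_of_nonneg_right hB2 hL0.le]

end PoincareAux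

/-- Single-orbit discrete Poincaré inequality in `ℤ²`: along the orbit
`Γ(n) = z + ⌊(n+1)/2⌋ l + ⌊n/2⌋ l^⊥` (with `⟨z,l⟩ ≥ 0`, `⟨z,l^⊥⟩ ≥ 1`), for any `p > 1` and
non-negative `Y` with `∑_n Y(Γ(n))^p < ∞`,
`∑_n |Π_{Δ(n)}^⊥ Γ(n)|² (Y(Γ(n+1))^{p-1} - Y(Γ(n))^{p-1})(Y(Γ(n+1)) - Y(Γ(n)))
  ≥ ((p-1)/(8 p² |l|²)) ∑_n Y(Γ(n))^p`,
the left-hand non-negative series being interpreted in `[0,∞]`. -/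
theorem stmt9 (p : ℝ) (hp : 1 < p) (z l : ℤ × ℤ) (hl : l ≠ 0)
    (hz1 : 0 ≤ ipz z l) (hz2 : 1 ≤ ipz z (perp l))
    (Y : ℤ × ℤ → ℝ) (hY : ∀ k, 0 ≤ Y k)
    (hsum : Summable fun n : ℕ => Y (orbit1 z l n) ^ p) :
    ENNReal.ofReal
        ((p - 1) / (8 * p ^ 2 * (nsqz l : ℝ)) * ∑' n : ℕ, Y (orbit1 z l n) ^ p) ≤
      ∑' n : ℕ, ENNReal.ofReal
        (((nsqz (orbit1 z l n) : ℝ) -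
            (ipz (orbit1 z l n) (orbit1 z l (n + 1) - orbit1 z l n) : ℝ) ^ 2 / (nsqz l : ℝ)) *
          ((Y (orbit1 z l (n + 1)) ^ (p - 1) - Y (orbit1 z l n) ^ (p - 1)) *
            (Y (orbit1 z l (n + 1)) - Y (orbit1 z l n)))) := by
  have hp0 : (0 : ℝ) < p := by linarith
  have hL : (1 : ℝ) ≤ (nsqz l : ℝ) := by exact_mod_cast nsqz_pos hl
  have hL0 : (0 : ℝ) < (nsqz l : ℝ) := by linarith
  set y : ℕ → ℝ := fun n => Y (orbit1 z l n) with hy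
  set u : ℕ → ℝ := fun n => y n ^ (p / 2) with hu
  set c : ℕ → ℝ := fun n => (nsqz (orbit1 z l n) : ℝ) -
      (ipz (orbit1 z l n) (orbit1 z l (n + 1) - orbit1 z l n) : ℝ) ^ 2 / (nsqz l : ℝ) with hc
  set F : ℕ → ℝ := fun n => c n *
      ((y (n + 1) ^ (p - 1) - y n ^ (p - 1)) * (y (n + 1) - y n)) with hF
  set Q : ℕ → ℝ := fun n => ((n : ℝ) + 1) ^ 2 * (u (n + 1) - u n) ^ 2 with hQ
  set c' : ℝ := (p - 1) / (2 * p ^ 2 * (nsqz l : ℝ)) with hc'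
  have hc'0 : 0 < c' := by
    apply div_pos (by linarith)
    positivity
  have hc0 : ∀ n, 0 ≤ c n := fun n =>
    le_trans (by positivity) (coeff_bound hl hz1 hz2 n)
  have hGpt : ∀ n, 2 * (p - 1) / p ^ 2 * (u (n + 1) - u n) ^ 2
      ≤ (y (n + 1) ^ (p - 1) - y n ^ (p - 1)) * (y (n + 1) - y n) := fun n =>
    pow_ineq hp (hY _) (hY _)
  have hconst0 : (0 : ℝ) ≤ 2 * (p - 1) / p ^ 2 := by
    apply div_nonneg (by linarith)
    positivity
  have hG0 : ∀ n, 0 ≤ (y (n + 1) ^ (p - 1) - y n ^ (p - 1)) * (y (n + 1) - y n) := fun n =>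
    le_trans (by positivity) (hGpt n)
  have hfpt : ∀ n, c' * Q n ≤ F n := by
    intro n
    have h1 := coeff_bound hl hz1 hz2 n
    have h2 := hGpt n
    have hm := mul_le_mul h1 h2 (by positivity) (hc0 n)
    calc c' * Q n = ((n : ℝ) + 1) ^ 2 / (4 * (nsqz l : ℝ))
          * (2 * (p - 1) / p ^ 2 * (u (n + 1) - u n) ^ 2) := by
          rw [hc', hQ]
          field_simp
          ring
    _ ≤ F n := hm
  have hcQ0 : ∀ n, 0 ≤ c' * Q n := fun n => mul_nonneg hc'0.le (by positivity)
  have hF0 : ∀ n, 0 ≤ F n := fun n => le_trans (hcQ0 n) (hfpt n)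
  by_cases hFsum : Summable F
  · -- summable case
    have hcQsum : Summable fun n => c' * Q n :=
      Summable.of_nonneg_of_le hcQ0 hfpt hFsum
    have hQsum : Summable Q := by
      have h2 := hcQsum.mul_left c'⁻¹
      apply h2.congr
      intro n
      field_simp
    have he : ∀ n, u n ^ 2 = y n ^ p := by
      intro n
      rw [hu]
      simp only
      rw [← Real.rpow_natCast (y n ^ (p / 2)) 2, ← Real.rpow_mul (hY _)]
      norm_num
      rfl
    have hu2 : Summable fun n : ℕ => u n ^ 2 := hsum.congr fun n => (he n).symm
    have hH := hardy (fun n => Real.rpow_nonneg (hY _) _) hu2 hQsum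
    have hreal : (p - 1) / (8 * p ^ 2 * (nsqz l : ℝ)) * (∑' n : ℕ, y n ^ p) ≤ ∑' n, F n := by
      have h1 : ∑' n, c' * Q n ≤ ∑' n, F n := Summable.tsum_le_tsum hfpt hcQsum hFsum
      rw [tsum_mul_left] at h1
      have h2 : (∑' n : ℕ, y n ^ p) = ∑' n : ℕ, u n ^ 2 := tsum_congr fun n => (he n).symm
      rw [h2]
      have h3 : (p - 1) / (8 * p ^ 2 * (nsqz l : ℝ)) = c' / 4 := by
        rw [hc', div_div]
        congr 1
        ring
      rw [h3]
      have h4 : c' / 4 * (∑' n : ℕ, u n ^ 2) ≤ c' / 4 * (4 * ∑' n : ℕ, Q n) := by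
        apply mul_le_mul_of_nonneg_left _ (by positivity)
        exact hH
      calc c' / 4 * (∑' n : ℕ, u n ^ 2) ≤ c' / 4 * (4 * ∑' n : ℕ, Q n) := h4
      _ = c' * ∑' n : ℕ, Q n := by ring
      _ ≤ ∑' n, F n := h1
    calc ENNReal.ofReal ((p - 1) / (8 * p ^ 2 * (nsqz l : ℝ)) * ∑' n : ℕ, y n ^ p)
        ≤ ENNReal.ofReal (∑' n, F n) := ENNReal.ofReal_le_ofReal hreal
    _ = ∑' n : ℕ, ENNReal.ofReal (F n) := ENNReal.ofReal_tsum_of_nonneg hF0 hFsum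
  · -- non-summable case: RHS is infinite
    have htop : (∑' n : ℕ, ENNReal.ofReal (F n)) = ⊤ := by
      by_contra h
      apply hFsum
      have hs := ENNReal.summable_toReal h
      apply hs.congr
      intro n
      simp [ENNReal.toReal_ofReal (hF0 n)]
    rw [htop]
    exact le_top
end
end

section
/- Let d ≥ 3 and let l₁, l₂ ∈ ℤ₀^d be linearly independent over ℝ with |l₁| = |l₂|. Let h ∈ ℤ^d with h ≠ 0 and ⟨h,l₁⟩ = ⟨h,l₂⟩ = 0. Define O(n) = h + ⌊n/2⌋·l₁ + ⌊(n+1)/2⌋·l₂ for n ∈ ℕ and Δ(n) = O(n+1) − O(n) (so Δ(n) = l₂ when n is even and Δ(n) = l₁ when n is odd). Then for all n ∈ ℕ: |O(n)|²·|Δ(n)|² − ⟨O(n), Δ(n)⟩² ≥ (n+1)²·|Δ(n)|²/(5|l₁|²); equivalently, |Π_{Δ(n)}^⊥ O(n)|² ≥ (n+1)²/(5|l₁|²). -/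
noncomputable section

/-- Euclidean inner product on `ℤ^d` (integer valued). -/
def ipZ {d : ℕ} (k l : Fin d → ℤ) : ℤ := ∑ i, k i * l i

/-- Squared Euclidean norm on `ℤ^d` (integer valued). -/
def nsqZ {d : ℕ} (k : Fin d → ℤ) : ℤ := ∑ i, (k i) ^ 2

/-- A lattice vector regarded as a vector of `ℝ^d`. -/
def toR {d : ℕ} (k : Fin d → ℤ) : Fin d → ℝ := fun i => (k i : ℝ)

/-- The orbit `O(n) = h + ⌊n/2⌋ l₁ + ⌊(n+1)/2⌋ l₂`. -/
def orbitB {d : ℕ} (h l₁ l₂ : Fin d → ℤ) (n : ℕ) : Fin d → ℤ :=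
  h + ((n / 2 : ℕ) : ℤ) • l₁ + (((n + 1) / 2 : ℕ) : ℤ) • l₂

/-!
Proof. Write `O(n) = h + p l₁ + q l₂`. The Gram determinant `G(u, v) = |u|²|v|² - ⟨u,v⟩²`
of `O(n)` and the step `Δ(n) ∈ {l₁, l₂}` splits off the orthogonal part `h` and kills the
multiple of `Δ(n)`, so that `G(O(n), Δ(n)) = |h|²|l₁|² + k² G(l₁, l₂)` with `k = ⌊(n+1)/2⌋`.
All quantities are integers and `G(l₁, l₂) > 0` by independence, so this is at least `1 + k²`,
and `(n+1)² ≤ (2k+1)² ≤ 5(1 + k²)`.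
-/

open Matrix

section Gram

variable {ι R : Type*} [Fintype ι]

theorem dotProduct_self_nonneg [Ring R] [LinearOrder R] [IsStrictOrderedRing R] (v : ι → R) :
    0 ≤ v ⬝ᵥ v :=
  Finset.sum_nonneg fun i _ => mul_self_nonneg (v i)

theorem dotProduct_self_pos [Ring R] [LinearOrder R] [IsStrictOrderedRing R] {v : ι → R}
    (hv : v ≠ 0) : 0 < v ⬝ᵥ v :=
  (dotProduct_self_nonneg v).lt_of_ne (Ne.symm (dotProduct_self_eq_zero.not.mpr hv))

variable [CommRing R]

def gramDet (u v : ι → R) : R := (u ⬝ᵥ u) * (v ⬝ᵥ v) - (u ⬝ᵥ v) ^ 2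

theorem gramDet_comm (u v : ι → R) : gramDet u v = gramDet v u := by
  simp only [gramDet, dotProduct_comm u v]; ring

theorem gramDet_add_of_dotProduct_eq_zero {u w v : ι → R} (huw : u ⬝ᵥ w = 0)
    (huv : u ⬝ᵥ v = 0) :
    gramDet (u + w) v = (u ⬝ᵥ u) * (v ⬝ᵥ v) + gramDet w v := by
  simp only [gramDet, add_dotProduct, dotProduct_add, huw, huv, dotProduct_comm w u]
  ring

theorem gramDet_smul_add_smul_left (p q : R) (u v : ι → R) :
    gramDet (p • u + q • v) v = p ^ 2 * gramDet u v := by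
  simp only [gramDet, add_dotProduct, dotProduct_add, smul_dotProduct, dotProduct_smul,
    smul_eq_mul, dotProduct_comm v u]
  ring

theorem dotProduct_self_smul_sub_smul (u v : ι → R) :
    ((v ⬝ᵥ v) • u - (u ⬝ᵥ v) • v) ⬝ᵥ ((v ⬝ᵥ v) • u - (u ⬝ᵥ v) • v) =
      (v ⬝ᵥ v) * gramDet u v := by
  simp only [gramDet, sub_dotProduct, dotProduct_sub, smul_dotProduct, dotProduct_smul,
    smul_eq_mul, dotProduct_comm v u]
  ring

theorem gramDet_pos_of_linearIndependent [LinearOrder R] [IsStrictOrderedRing R] {u v : ι → R}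
    (huv : LinearIndependent R ![u, v]) : 0 < gramDet u v := by
  have hv : 0 < v ⬝ᵥ v := dotProduct_self_pos (huv.ne_zero 1)
  have hw : (v ⬝ᵥ v) • u - (u ⬝ᵥ v) • v ≠ 0 := fun hw => hv.ne' <|
    (LinearIndependent.pair_iff.mp huv _ (-(u ⬝ᵥ v)) (by rwa [neg_smul, ← sub_eq_add_neg])).1
  have := dotProduct_self_pos hw
  rw [dotProduct_self_smul_sub_smul] at this
  exact pos_of_mul_pos_right this hv.le

end Gram

section Lattice

variable {d : ℕ}

theorem ipZ_eq_dotProduct (k l : Fin d → ℤ) : ipZ k l = k ⬝ᵥ l := rfl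

theorem nsqZ_eq_dotProduct (k : Fin d → ℤ) : nsqZ k = k ⬝ᵥ k := by
  simp only [nsqZ, dotProduct, sq]

theorem nsqZ_mul_nsqZ_sub_ipZ_sq (k l : Fin d → ℤ) :
    nsqZ k * nsqZ l - ipZ k l ^ 2 = gramDet k l := by
  rw [gramDet, nsqZ_eq_dotProduct, nsqZ_eq_dotProduct, ipZ_eq_dotProduct]

theorem linearIndependent_int_of_toR {u v : Fin d → ℤ}
    (huv : LinearIndependent ℝ ![toR u, toR v]) : LinearIndependent ℤ ![u, v] := by
  refine LinearIndependent.pair_iff.mpr fun s t hst => ?_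
  have hR : (s : ℝ) • toR u + (t : ℝ) • toR v = 0 := funext fun i => by
    simpa [toR] using congr_arg (fun w : Fin d → ℤ => (w i : ℝ)) hst
  exact_mod_cast LinearIndependent.pair_iff.mp huv _ _ hR

variable (h l₁ l₂ : Fin d → ℤ)

theorem orbitB_two_mul (m : ℕ) :
    orbitB h l₁ l₂ (2 * m) = h + ((m : ℤ) • l₁ + (m : ℤ) • l₂) := by
  rw [orbitB, add_assoc, show 2 * m / 2 = m by omega, show (2 * m + 1) / 2 = m by omega]

theorem orbitB_two_mul_add_one (m : ℕ) :
    orbitB h l₁ l₂ (2 * m + 1) = h + ((m : ℤ) • l₁ + ((m : ℤ) + 1) • l₂) := by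
  rw [orbitB, add_assoc, show (2 * m + 1) / 2 = m by omega,
    show (2 * m + 1 + 1) / 2 = m + 1 by omega]
  push_cast; rfl

theorem orbitB_two_mul_add_two (m : ℕ) :
    orbitB h l₁ l₂ (2 * m + 1 + 1) = h + (((m : ℤ) + 1) • l₁ + ((m : ℤ) + 1) • l₂) := by
  rw [orbitB, add_assoc, show (2 * m + 1 + 1) / 2 = m + 1 by omega,
    show (2 * m + 1 + 1 + 1) / 2 = m + 1 by omega]
  push_cast; rfl

theorem orbitB_two_mul_add_one_sub (m : ℕ) :
    orbitB h l₁ l₂ (2 * m + 1) - orbitB h l₁ l₂ (2 * m) = l₂ := by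
  rw [orbitB_two_mul_add_one, orbitB_two_mul]; module

theorem orbitB_two_mul_add_two_sub (m : ℕ) :
    orbitB h l₁ l₂ (2 * m + 1 + 1) - orbitB h l₁ l₂ (2 * m + 1) = l₁ := by
  rw [orbitB_two_mul_add_two, orbitB_two_mul_add_one]; module

variable {h l₁ l₂}

theorem nsqZ_orbitB_succ_sub (hnorm : nsqZ l₁ = nsqZ l₂) (n : ℕ) :
    nsqZ (orbitB h l₁ l₂ (n + 1) - orbitB h l₁ l₂ n) = nsqZ l₁ := by
  obtain ⟨m, rfl | rfl⟩ := Nat.even_or_odd' n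
  · rw [orbitB_two_mul_add_one_sub, hnorm]
  · rw [orbitB_two_mul_add_two_sub]

theorem gramDet_orbitB (hh1 : ipZ h l₁ = 0) (hh2 : ipZ h l₂ = 0) (hnorm : nsqZ l₁ = nsqZ l₂)
    (n : ℕ) :
    gramDet (orbitB h l₁ l₂ n) (orbitB h l₁ l₂ (n + 1) - orbitB h l₁ l₂ n) =
      nsqZ h * nsqZ l₁ + (((n + 1) / 2 : ℕ) : ℤ) ^ 2 * gramDet l₁ l₂ := by
  rw [ipZ_eq_dotProduct] at hh1 hh2
  rw [nsqZ_eq_dotProduct, nsqZ_eq_dotProduct] at hnorm ⊢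
  have horth (p q : ℤ) : h ⬝ᵥ (p • l₁ + q • l₂) = 0 := by
    simp only [dotProduct_add, dotProduct_smul, hh1, hh2, smul_zero, add_zero]
  obtain ⟨m, rfl | rfl⟩ := Nat.even_or_odd' n
  · rw [orbitB_two_mul_add_one_sub, orbitB_two_mul,
      gramDet_add_of_dotProduct_eq_zero (horth _ _) hh2, gramDet_smul_add_smul_left, hnorm,
      show (2 * m + 1) / 2 = m by omega]
  · rw [orbitB_two_mul_add_two_sub, orbitB_two_mul_add_one,
      gramDet_add_of_dotProduct_eq_zero (horth _ _) hh1, add_comm ((m : ℤ) • l₁),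
      gramDet_smul_add_smul_left, gramDet_comm, show (2 * m + 1 + 1) / 2 = m + 1 by omega]
    push_cast; rfl

end Lattice

theorem sq_succ_le_five_mul_one_add_sq_succ_div_two (n : ℕ) :
    ((n : ℤ) + 1) ^ 2 ≤ 5 * (1 + (((n + 1) / 2 : ℕ) : ℤ) ^ 2) := by
  have hk : (n : ℤ) + 1 ≤ 2 * (((n + 1) / 2 : ℕ) : ℤ) + 1 := by omega
  nlinarith [sq_nonneg ((((n + 1) / 2 : ℕ) : ℤ) - 2)]

theorem stmt14_general (d : ℕ) (l₁ l₂ h : Fin d → ℤ)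
    (hind : LinearIndependent ℝ ![toR l₁, toR l₂]) (hnorm : nsqZ l₁ = nsqZ l₂)
    (hh0 : h ≠ 0) (hh1 : ipZ h l₁ = 0) (hh2 : ipZ h l₂ = 0) (n : ℕ) :
    ((n : ℝ) + 1) ^ 2 * ((nsqZ (orbitB h l₁ l₂ (n + 1) - orbitB h l₁ l₂ n) : ℤ) : ℝ) /
        (5 * ((nsqZ l₁ : ℤ) : ℝ)) ≤
      ((nsqZ (orbitB h l₁ l₂ n) * nsqZ (orbitB h l₁ l₂ (n + 1) - orbitB h l₁ l₂ n) -
          ipZ (orbitB h l₁ l₂ n) (orbitB h l₁ l₂ (n + 1) - orbitB h l₁ l₂ n) ^ 2 : ℤ) : ℝ) := by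
  have hind' := linearIndependent_int_of_toR hind
  have hG : 0 < gramDet l₁ l₂ := gramDet_pos_of_linearIndependent hind'
  have hL : 0 < nsqZ l₁ := nsqZ_eq_dotProduct l₁ ▸ dotProduct_self_pos (hind'.ne_zero 0)
  have hS : 0 < nsqZ h := nsqZ_eq_dotProduct h ▸ dotProduct_self_pos hh0
  set k : ℤ := (((n + 1) / 2 : ℕ) : ℤ)
  have hgram : 1 + k ^ 2 ≤ nsqZ h * nsqZ l₁ + k ^ 2 * gramDet l₁ l₂ :=
    add_le_add (one_le_mul_of_one_le_of_one_le hS hL) (le_mul_of_one_le_right (sq_nonneg k) hG)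
  have hmain : ((n : ℤ) + 1) ^ 2 ≤ (nsqZ h * nsqZ l₁ + k ^ 2 * gramDet l₁ l₂) * 5 :=
    (sq_succ_le_five_mul_one_add_sq_succ_div_two n).trans (by linarith)
  rw [nsqZ_mul_nsqZ_sub_ipZ_sq, gramDet_orbitB hh1 hh2 hnorm, nsqZ_orbitB_succ_sub hnorm,
    mul_div_mul_right _ _ (by positivity), div_le_iff₀ (by norm_num)]
  exact_mod_cast hmain

/-- Orbit estimate through an orthogonal base point, `d ≥ 3`: if `l₁, l₂ ∈ ℤ₀^d` are
linearly independent over `ℝ` with `|l₁| = |l₂|`, and `h ∈ ℤ^d`, `h ≠ 0`, is orthogonal to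
`l₁` and `l₂`, then along the orbit `O(n) = h + ⌊n/2⌋ l₁ + ⌊(n+1)/2⌋ l₂` with steps
`Δ(n) = O(n+1) - O(n)` one has
`|O(n)|²|Δ(n)|² - ⟨O(n),Δ(n)⟩² ≥ (n+1)² |Δ(n)|² / (5 |l₁|²)`. -/
theorem stmt14 (d : ℕ) (hd : 3 ≤ d) (l₁ l₂ h : Fin d → ℤ)
    (hl₁ : l₁ ≠ 0) (hl₂ : l₂ ≠ 0)
    (hind : LinearIndependent ℝ ![toR l₁, toR l₂]) (hnorm : nsqZ l₁ = nsqZ l₂)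
    (hh0 : h ≠ 0) (hh1 : ipZ h l₁ = 0) (hh2 : ipZ h l₂ = 0) (n : ℕ) :
    ((n : ℝ) + 1) ^ 2 * ((nsqZ (orbitB h l₁ l₂ (n + 1) - orbitB h l₁ l₂ n) : ℤ) : ℝ) /
        (5 * ((nsqZ l₁ : ℤ) : ℝ)) ≤
      ((nsqZ (orbitB h l₁ l₂ n) * nsqZ (orbitB h l₁ l₂ (n + 1) - orbitB h l₁ l₂ n) -
          ipZ (orbitB h l₁ l₂ n) (orbitB h l₁ l₂ (n + 1) - orbitB h l₁ l₂ n) ^ 2 : ℤ) : ℝ) :=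
  stmt14_general d l₁ l₂ h hind hnorm hh0 hh1 hh2 n
end
end

section
/- Let d ≥ 1 and let k, l, a ∈ ℝ^d with k ≠ 0, k + l ≠ 0, k − l ≠ 0, |a| = 1 and ⟨a,l⟩ = 0. Then ⟨a,k⟩² / (|k+l|²·|k−l|²) ≤ 1/|k|². -/
/-!
Since `⟨a, l⟩ = 0`, `⟨a, k⟩ = ⟨a, k ± l⟩`, so by Cauchy–Schwarz `⟨a, k⟩²` is at most
`|a|²` times the smaller of `|k + l|²`, `|k - l|²`, while by the parallelogram law the larger one
is at least `|k|² + |l|² ≥ |k|²`. Multiplying gives `⟨a, k⟩² |k|² ≤ |a|² |k + l|² |k - l|²`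
in any real inner product space; the coordinate statement is its instance for `EuclideanSpace ℝ (Fin d)`.
-/

noncomputable section

def ipV {d : ℕ} (v w : Fin d → ℝ) : ℝ := ∑ i, v i * w i

def nsqV {d : ℕ} (v : Fin d → ℝ) : ℝ := ∑ i, (v i) ^ 2

open RealInnerProductSpace

section InnerProductSpace

variable {F : Type*} [NormedAddCommGroup F] [InnerProductSpace ℝ F]

theorem real_inner_sq_le_norm_sq_mul_norm_sq (x y : F) : ⟪x, y⟫ ^ 2 ≤ ‖x‖ ^ 2 * ‖y‖ ^ 2 := by
  rw [← mul_pow, ← sq_abs]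
  exact pow_le_pow_left₀ (abs_nonneg _) (abs_real_inner_le_norm x y) 2

theorem norm_sq_le_max_norm_add_sq_norm_sub_sq (x y : F) :
    ‖x‖ ^ 2 ≤ max (‖x + y‖ ^ 2) (‖x - y‖ ^ 2) := by
  have := parallelogram_law_with_norm ℝ x y
  rw [le_max_iff]
  by_contra! h
  nlinarith [sq_nonneg ‖y‖]

theorem real_inner_sq_mul_norm_sq_le_of_inner_eq_zero {a l : F} (hal : ⟪a, l⟫ = 0) (k : F) :
    ⟪a, k⟫ ^ 2 * ‖k‖ ^ 2 ≤ ‖a‖ ^ 2 * (‖k + l‖ ^ 2 * ‖k - l‖ ^ 2) := by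
  have hadd : ⟪a, k⟫ = ⟪a, k + l⟫ := by rw [inner_add_right, hal, add_zero]
  have hsub : ⟪a, k⟫ = ⟪a, k - l⟫ := by rw [inner_sub_right, hal, sub_zero]
  have hmax := norm_sq_le_max_norm_add_sq_norm_sub_sq k l
  rcases le_total (‖k + l‖ ^ 2) (‖k - l‖ ^ 2) with h | h
  · rw [max_eq_right h] at hmax
    rw [← mul_assoc, hadd]
    exact mul_le_mul (real_inner_sq_le_norm_sq_mul_norm_sq a _) hmax (by positivity) (by positivity)
  · rw [max_eq_left h] at hmax
    rw [mul_comm (‖k + l‖ ^ 2), ← mul_assoc, hsub]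
    exact mul_le_mul (real_inner_sq_le_norm_sq_mul_norm_sq a _) hmax (by positivity) (by positivity)

end InnerProductSpace

theorem ipV_eq_inner {d : ℕ} (v w : Fin d → ℝ) :
    ipV v w = ⟪WithLp.toLp 2 v, WithLp.toLp 2 w⟫ := by
  simp [ipV, PiLp.inner_apply, mul_comm]

theorem nsqV_eq_norm_sq {d : ℕ} (v : Fin d → ℝ) : nsqV v = ‖WithLp.toLp 2 v‖ ^ 2 := by
  simp [nsqV, EuclideanSpace.norm_sq_eq]

theorem nsqV_pos {d : ℕ} {v : Fin d → ℝ} (hv : v ≠ 0) : 0 < nsqV v := by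
  rw [nsqV_eq_norm_sq]
  exact pow_pos (norm_pos_iff.mpr (by simpa using hv)) 2

theorem stmt17_general (d : ℕ) (k l a : Fin d → ℝ)
    (hk : k ≠ 0) (hkl : k + l ≠ 0) (hkl' : k - l ≠ 0)
    (ha : nsqV a = 1) (hal : ipV a l = 0) :
    ipV a k ^ 2 / (nsqV (k + l) * nsqV (k - l)) ≤ 1 / nsqV k := by
  have key := real_inner_sq_mul_norm_sq_le_of_inner_eq_zero (k := WithLp.toLp 2 k)
    (ipV_eq_inner a l ▸ hal)
  rw [← WithLp.toLp_add, ← WithLp.toLp_sub, ← nsqV_eq_norm_sq, ← nsqV_eq_norm_sq,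
    ← nsqV_eq_norm_sq, ← nsqV_eq_norm_sq, ← ipV_eq_inner, ha, one_mul] at key
  rw [div_le_div_iff₀ (mul_pos (nsqV_pos hkl) (nsqV_pos hkl')) (nsqV_pos hk), one_mul]
  exact key

/-- For `k, l, a ∈ ℝ^d` with `k ≠ 0`, `k + l ≠ 0`, `k - l ≠ 0`, `|a| = 1` and `⟨a,l⟩ = 0`:
`⟨a,k⟩² / (|k+l|²|k-l|²) ≤ 1/|k|²`. -/
theorem stmt17 (d : ℕ) (hd : 1 ≤ d) (k l a : Fin d → ℝ)
    (hk : k ≠ 0) (hkl : k + l ≠ 0) (hkl' : k - l ≠ 0)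
    (ha : nsqV a = 1) (hal : ipV a l = 0) :
    ipV a k ^ 2 / (nsqV (k + l) * nsqV (k - l)) ≤ 1 / nsqV k :=
  stmt17_general d k l a hk hkl hkl' ha hal
end
end
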